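/- arXiv:1209.2820 — 2 statements merged into one kernel-verified Lean document; each statement's English description precedes it below -/
import Mathlib

section
/- (Inequality (8) in the proof of Theorem 1) Let K be a Markov kernel from a standard Borel input space 𝒳 to a standard Borel output space 𝒴, and let b : 𝒳 → [0, ∞) be an unbounded cost function. Then for every β ≥ β′ ≥ 0 and every ε with 0 < ε ≤ 1, the exact-cost capacity–cost function satisfies C(β) ≥ (1 − ε) C(β′). -/
open MeasureTheory ProbabilityTheory
open scoped ENNReal NNReal

/-- Kullback–Leibler divergence between two measures, valued in `ℝ≥0∞`. -/
noncomputable def klDiv {Ω : Type*} [MeasurableSpace Ω] (μ ν : Measure Ω) : ℝ≥0∞ :=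
  open scoped Classical in
  if μ ≪ ν ∧ Integrable (llr μ ν) μ then ENNReal.ofReal (∫ x, llr μ ν x ∂μ) else ⊤

/-- Mutual information of an input distribution `μ` and a channel (Markov kernel) `K`:
the KL divergence between the joint law `μ ⊗ₘ K` and the product of its two marginals. -/
noncomputable def mutualInfo {𝒳 𝒴 : Type*} [MeasurableSpace 𝒳] [MeasurableSpace 𝒴]
    (μ : Measure 𝒳) (K : Kernel 𝒳 𝒴) : ℝ≥0∞ :=
  klDiv (μ ⊗ₘ K) (((μ ⊗ₘ K).fst).prod ((μ ⊗ₘ K).snd))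

/-- Exact-cost capacity–cost function: the supremum of the mutual information over all
input probability measures with cost exactly `β`. -/
noncomputable def capacity {𝒳 𝒴 : Type*} [MeasurableSpace 𝒳] [MeasurableSpace 𝒴]
    (K : Kernel 𝒳 𝒴) (b : 𝒳 → ℝ≥0) (β : ℝ≥0) : ℝ≥0∞ :=
  ⨆ μ : {μ : Measure 𝒳 // IsProbabilityMeasure μ ∧ ∫⁻ x, (b x : ℝ≥0∞) ∂μ = (β : ℝ≥0∞)},
    mutualInfo μ.1 K

/-- Bounded-cost capacity–cost function: the supremum of the mutual information over all
input probability measures with cost at most `β` (the supremum over an empty set is `0`). -/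
noncomputable def capacityLE {𝒳 𝒴 : Type*} [MeasurableSpace 𝒳] [MeasurableSpace 𝒴]
    (K : Kernel 𝒳 𝒴) (b : 𝒳 → ℝ≥0) (β : ℝ≥0) : ℝ≥0∞ :=
  ⨆ μ : {μ : Measure 𝒳 // IsProbabilityMeasure μ ∧ ∫⁻ x, (b x : ℝ≥0∞) ∂μ ≤ (β : ℝ≥0∞)},
    mutualInfo μ.1 K

/-! Time sharing: given an input `μ'` of cost `β'`, the unboundedness of `b` provides a point `x₀`
of cost `(β - (1 - ε) β') / ε`, so that `μ = (1 - ε) μ' + ε δ_{x₀}` has cost exactly `β`.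
Mutual information is `I(ν) = D(ν ⊗ K ‖ ν × (K ∘ ν))`. For a fixed reference `q` the divergence
`D(ν ⊗ K ‖ ν × q)` is monotone in `ν`, and the output law `K ∘ ν` minimizes `D(ν ⊗ K ‖ ν × ·)`.
Hence, with `q = K ∘ μ`,
`(1 - ε) I(μ') ≤ (1 - ε) D(μ' ⊗ K ‖ μ' × q) ≤ D(μ ⊗ K ‖ μ × q) = I(μ) ≤ C(β)`. -/

namespace MeasureTheory.Measure

variable {α β : Type*} [MeasurableSpace α] [MeasurableSpace β]

lemma compProd_mono_left {μ₁ μ : Measure α} [SFinite μ₁] [SFinite μ] (h : μ₁ ≤ μ)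
    (κ : Kernel α β) [IsSFiniteKernel κ] :
    μ₁ ⊗ₘ κ ≤ μ ⊗ₘ κ := by
  refine le_iff.mpr fun s hs ↦ ?_
  rw [compProd_apply hs, compProd_apply hs]
  exact lintegral_mono' h le_rfl

lemma compProd_eq_withDensity_rnDeriv [MeasurableSpace.CountableOrCountablyGenerated α β]
    {μ : Measure α} [SFinite μ] {κ η : Kernel α β} [IsFiniteKernel κ] [IsFiniteKernel η]
    (h : ∀ᵐ a ∂μ, κ a ≪ η a) :
    μ ⊗ₘ κ = (μ ⊗ₘ η).withDensity (fun p ↦ κ.rnDeriv η p.1 p.2) := by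
  rw [compProd_congr (h.mono fun a ha ↦ (Kernel.withDensity_rnDeriv_eq ha).symm),
    compProd_withDensity (Kernel.measurable_rnDeriv κ η)]

end MeasureTheory.Measure

namespace InformationTheory

variable {α β : Type*} [MeasurableSpace α] [MeasurableSpace β]

lemma klDiv_eq_lintegral_klFun_of_eq_withDensity {μ ν : Measure α} [IsFiniteMeasure μ]
    [IsFiniteMeasure ν] {f : α → ℝ≥0∞} (hf : Measurable f) (hμ : μ = ν.withDensity f) :
    klDiv μ ν = ∫⁻ x, ENNReal.ofReal (klFun (f x).toReal) ∂ν := by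
  rw [klDiv_eq_lintegral_klFun_of_ac (hμ ▸ withDensity_absolutelyContinuous ν f)]
  refine lintegral_congr_ae ?_
  filter_upwards [hμ ▸ Measure.rnDeriv_withDensity ν hf] with x hx
  rw [hx]

lemma klDiv_map_measurableEquiv (e : α ≃ᵐ β) (μ ν : Measure α) [IsFiniteMeasure μ]
    [IsFiniteMeasure ν] : klDiv (μ.map e) (ν.map e) = klDiv μ ν := by
  refine le_antisymm (klDiv_map_le μ ν e.measurable) ?_
  simpa only [MeasurableEquiv.map_symm_map] using
    klDiv_map_le (μ.map e) (ν.map e) e.symm.measurable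

/-- Both sides integrate `klFun` of the same kernel density `κ.rnDeriv η`, against
`μ₁ ⊗ₘ η ≤ μ ⊗ₘ η`. -/
lemma klDiv_compProd_le_of_le [MeasurableSpace.CountableOrCountablyGenerated α β]
    {κ η : Kernel α β} [IsFiniteKernel κ] [IsFiniteKernel η] {μ₁ μ : Measure α}
    [IsFiniteMeasure μ] (h : μ₁ ≤ μ) :
    klDiv (μ₁ ⊗ₘ κ) (μ₁ ⊗ₘ η) ≤ klDiv (μ ⊗ₘ κ) (μ ⊗ₘ η) := by
  have : IsFiniteMeasure μ₁ := isFiniteMeasure_of_le μ h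
  by_cases hac : μ ⊗ₘ κ ≪ μ ⊗ₘ η
  swap; · simp [hac]
  have hκη : ∀ᵐ a ∂μ, κ a ≪ η a := hac.kernel_of_compProd
  rw [klDiv_eq_lintegral_klFun_of_eq_withDensity (Kernel.measurable_rnDeriv κ η)
      (Measure.compProd_eq_withDensity_rnDeriv hκη),
    klDiv_eq_lintegral_klFun_of_eq_withDensity (Kernel.measurable_rnDeriv κ η)
      (Measure.compProd_eq_withDensity_rnDeriv
        ((Measure.absolutelyContinuous_of_le h).ae_le hκη))]
  exact lintegral_mono' (Measure.compProd_mono_left h η) le_rfl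

lemma klDiv_compProd_const_comp_le [StandardBorelSpace α] (μ : Measure α) [IsProbabilityMeasure μ]
    (κ : Kernel α β) [IsMarkovKernel κ] (ν : Measure β) [IsProbabilityMeasure ν] :
    klDiv (μ ⊗ₘ κ) (μ ⊗ₘ Kernel.const α (κ ∘ₘ μ)) ≤ klDiv (μ ⊗ₘ κ) (μ ⊗ₘ Kernel.const α ν) := by
  have : Nonempty α := nonempty_of_isProbabilityMeasure μ
  have hswap (ξ : Measure β) [IsProbabilityMeasure ξ] : klDiv (μ ⊗ₘ κ) (μ ⊗ₘ Kernel.const α ξ)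
      = klDiv ((μ ⊗ₘ κ).map Prod.swap) (ξ ⊗ₘ Kernel.const β μ) := by
    rw [Measure.compProd_const, Measure.compProd_const, ← Measure.prod_swap (μ := μ),
      ← klDiv_map_measurableEquiv MeasurableEquiv.prodComm]
    rfl
  rw [hswap, hswap]
  set ρ := (μ ⊗ₘ κ).map Prod.swap
  have hρ : ρ.fst = κ ∘ₘ μ := by rw [Measure.fst_map_swap, Measure.snd_compProd]
  -- Disintegrating the swapped joint law over the output, the chain rule reads
  -- `D(μ ⊗ₘ κ ‖ μ × ν) = D(κ ∘ₘ μ ‖ ν) + D(μ ⊗ₘ κ ‖ μ × (κ ∘ₘ μ))`.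
  have hchain := klDiv_compProd_eq_add ρ.fst ν ρ.condKernel (Kernel.const β μ)
  rw [ρ.disintegrate ρ.condKernel, hρ] at hchain
  exact le_add_self.trans_eq hchain.symm

end InformationTheory

/-- Mathlib's `InformationTheory.klDiv` carries the correction term `ν.real univ - μ.real univ`,
which vanishes between probability measures. -/
lemma klDiv_eq_informationTheory_klDiv {Ω : Type*} [MeasurableSpace Ω] (μ ν : Measure Ω)
    [IsProbabilityMeasure μ] [IsProbabilityMeasure ν] :
    klDiv μ ν = InformationTheory.klDiv μ ν := by
  rw [klDiv, InformationTheory.klDiv_def]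
  simp

section Channel

variable {𝒳 𝒴 : Type*} [MeasurableSpace 𝒳] [MeasurableSpace 𝒴]

lemma mutualInfo_eq_klDiv_compProd_const (μ : Measure 𝒳) [IsProbabilityMeasure μ]
    (K : Kernel 𝒳 𝒴) [IsMarkovKernel K] :
    mutualInfo μ K = InformationTheory.klDiv (μ ⊗ₘ K) (μ ⊗ₘ Kernel.const 𝒳 (K ∘ₘ μ)) := by
  rw [mutualInfo, Measure.fst_compProd, Measure.snd_compProd, Measure.compProd_const,
    klDiv_eq_informationTheory_klDiv]

lemma mul_mutualInfo_le_of_smul_le [StandardBorelSpace 𝒳]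
    [MeasurableSpace.CountablyGenerated 𝒴] (K : Kernel 𝒳 𝒴) [IsMarkovKernel K]
    {μ₁ μ : Measure 𝒳} [IsProbabilityMeasure μ₁] [IsProbabilityMeasure μ] {c : ℝ≥0}
    (h : c • μ₁ ≤ μ) :
    c * mutualInfo μ₁ K ≤ mutualInfo μ K := by
  rw [mutualInfo_eq_klDiv_compProd_const, mutualInfo_eq_klDiv_compProd_const]
  calc (c : ℝ≥0∞) * InformationTheory.klDiv (μ₁ ⊗ₘ K) (μ₁ ⊗ₘ Kernel.const 𝒳 (K ∘ₘ μ₁))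
      ≤ c * InformationTheory.klDiv (μ₁ ⊗ₘ K) (μ₁ ⊗ₘ Kernel.const 𝒳 (K ∘ₘ μ)) := by
        gcongr
        exact InformationTheory.klDiv_compProd_const_comp_le μ₁ K _
    _ = InformationTheory.klDiv ((c • μ₁) ⊗ₘ K) ((c • μ₁) ⊗ₘ Kernel.const 𝒳 (K ∘ₘ μ)) := by
        simp only [← InformationTheory.klDiv_smul_same, ENNReal.smul_def,
          Measure.compProd_smul_left]
    _ ≤ InformationTheory.klDiv (μ ⊗ₘ K) (μ ⊗ₘ Kernel.const 𝒳 (K ∘ₘ μ)) :=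
        InformationTheory.klDiv_compProd_le_of_le h

lemma exists_isProbabilityMeasure_lintegral_eq_smul_le [MeasurableSingletonClass 𝒳]
    (b : 𝒳 → ℝ≥0) (hb_unbounded : ∀ b₀ : ℝ≥0, ∃ x : 𝒳, b x = b₀)
    {μ' : Measure 𝒳} [IsProbabilityMeasure μ'] {β β' : ℝ≥0}
    (hcost : ∫⁻ x, (b x : ℝ≥0∞) ∂μ' = β') (h : β' ≤ β) {e : ℝ≥0} (he0 : e ≠ 0) (he1 : e ≤ 1) :
    ∃ μ : Measure 𝒳, IsProbabilityMeasure μ ∧ ∫⁻ x, (b x : ℝ≥0∞) ∂μ = β ∧ (1 - e) • μ' ≤ μ := by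
  obtain ⟨x₀, hx₀⟩ := hb_unbounded ((β - (1 - e) * β') / e)
  refine ⟨(1 - e) • μ' + e • Measure.dirac x₀, ⟨?_⟩, ?_, Measure.le_add_right le_rfl⟩
  · simp only [Measure.coe_add, Measure.coe_smul, Pi.add_apply, Pi.smul_apply, measure_univ,
      ENNReal.smul_def, smul_eq_mul, mul_one]
    exact_mod_cast tsub_add_cancel_of_le he1
  · rw [lintegral_add_measure, lintegral_smul_measure, lintegral_smul_measure, lintegral_dirac,
      hcost, hx₀, ENNReal.smul_def, ENNReal.smul_def, smul_eq_mul, smul_eq_mul]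
    norm_cast
    rw [mul_div_cancel₀ _ he0]
    exact add_tsub_cancel_of_le ((mul_le_of_le_one_left zero_le tsub_le_self).trans h)

lemma mutualInfo_le_capacity (K : Kernel 𝒳 𝒴) (b : 𝒳 → ℝ≥0) {β : ℝ≥0} {μ : Measure 𝒳}
    [IsProbabilityMeasure μ] (hcost : ∫⁻ x, (b x : ℝ≥0∞) ∂μ = β) :
    mutualInfo μ K ≤ capacity K b β :=
  le_iSup (fun ρ : {ρ : Measure 𝒳 // IsProbabilityMeasure ρ ∧ ∫⁻ x, (b x : ℝ≥0∞) ∂ρ = β} ↦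
    mutualInfo ρ.1 K) ⟨μ, inferInstance, hcost⟩

end Channel

theorem capacity_time_sharing_bound_general
    {𝒳 𝒴 : Type*} [MeasurableSpace 𝒳] [StandardBorelSpace 𝒳]
    [MeasurableSpace 𝒴] [StandardBorelSpace 𝒴]
    (K : Kernel 𝒳 𝒴) [IsMarkovKernel K]
    (b : 𝒳 → ℝ≥0)
    (hb_unbounded : ∀ b₀ : ℝ≥0, ∃ x : 𝒳, b x = b₀)
    (β β' : ℝ≥0) (h : β' ≤ β)
    (ε : ℝ) (hε0 : 0 < ε) (hε1 : ε ≤ 1) :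
    ENNReal.ofReal (1 - ε) * capacity K b β' ≤ capacity K b β := by
  have h_one_sub : (1 - ε).toNNReal = 1 - ε.toNNReal := by
    rw [NNReal.sub_def, NNReal.coe_one, Real.coe_toNNReal _ hε0.le]
  rw [capacity, ENNReal.mul_iSup]
  refine iSup_le fun ⟨μ', hμ', hcost⟩ ↦ ?_
  obtain ⟨μ, hμ, hμcost, hle⟩ := exists_isProbabilityMeasure_lintegral_eq_smul_le b hb_unbounded
    hcost h (Real.toNNReal_pos.mpr hε0).ne' (Real.toNNReal_le_one.mpr hε1)
  rw [← h_one_sub] at hle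
  exact (mul_mutualInfo_le_of_smul_le K hle).trans (mutualInfo_le_capacity K b hμcost)

/-- Inequality (8) in the proof of Theorem 1: for a point-to-point channel between standard
Borel spaces with an unbounded cost function, for every `β ≥ β' ≥ 0` and every `0 < ε ≤ 1`,
the exact-cost capacity–cost function satisfies `C(β) ≥ (1 - ε) C(β')`. -/
theorem capacity_time_sharing_bound
    {𝒳 𝒴 : Type*} [MeasurableSpace 𝒳] [StandardBorelSpace 𝒳]
    [MeasurableSpace 𝒴] [StandardBorelSpace 𝒴]
    (K : Kernel 𝒳 𝒴) [IsMarkovKernel K]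
    (b : 𝒳 → ℝ≥0) (hb : Measurable b)
    (hb_unbounded : ∀ b₀ : ℝ≥0, ∃ x : 𝒳, b x = b₀)
    (β β' : ℝ≥0) (h : β' ≤ β)
    (ε : ℝ) (hε0 : 0 < ε) (hε1 : ε ≤ 1) :
    ENNReal.ofReal (1 - ε) * capacity K b β' ≤ capacity K b β :=
  capacity_time_sharing_bound_general K b hb_unbounded β β' h ε hε0 hε1
end

section
/- (Theorem 3, abstract form) Let k ≥ 1 and let 𝒞 be a map assigning to each cost vector β ∈ [0, ∞)^k a set 𝒞(β) ⊆ [0, ∞)^k of rate vectors such that: (i) each 𝒞(β) is a closed subset of ℝ^k; (ii) the zero rate vector 0 belongs to 𝒞(β) for every β; and (iii) the time-sharing property holds: for all β′, β″ ∈ [0, ∞)^k, all R′ ∈ 𝒞(β′), R″ ∈ 𝒞(β″), and all ε ∈ [0, 1], the vector (1 − ε)R′ + εR″ belongs to 𝒞((1 − ε)β′ + εβ″). Then 𝒞 is monotone: for all β, β′ ∈ [0, ∞)^k with β_i ≥ β_i′ for every i = 1, …, k, one has 𝒞(β) ⊇ 𝒞(β′). -/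
/-!
Time-sharing a rate `R ∈ 𝒞 β'` (weight `t < 1`) with the zero rate at the cost
`β'' = β' + (1 - t)⁻¹ • (β - β') ≥ 0` (weight `1 - t`) has average cost exactly `β`, so
`t • R ∈ 𝒞 β` for every `t < 1`. Letting `t → 1` in the closed set `𝒞 β` gives `R ∈ 𝒞 β`.
-/

open Filter Set Topology

theorem IsClosed.mem_of_forall_smul_mem {E : Type*} [TopologicalSpace E] [AddCommGroup E]
    [Module ℝ E] [ContinuousSMul ℝ E] {s : Set E} (hs : IsClosed s) {x : E}
    (h : ∀ t ∈ Ioo (0 : ℝ) 1, t • x ∈ s) : x ∈ s := by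
  have hlim : Tendsto (fun t : ℝ => t • x) (𝓝[<] 1) (𝓝 x) := by
    simpa using (tendsto_nhdsWithin_of_tendsto_nhds (tendsto_id (x := 𝓝 (1 : ℝ)))).smul_const x
  exact hs.mem_of_tendsto hlim (mem_of_superset (Ioo_mem_nhdsLT one_pos) h)

section TimeSharing

variable {ι F : Type*} [AddCommGroup F] [Module ℝ F]

def HasTimeSharing (𝒞 : (ι → ℝ) → Set F) : Prop :=
  ∀ β' β'' : ι → ℝ, (∀ i, 0 ≤ β' i) → (∀ i, 0 ≤ β'' i) →
    ∀ R' ∈ 𝒞 β', ∀ R'' ∈ 𝒞 β'', ∀ ε : ℝ, 0 ≤ ε → ε ≤ 1 →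
      (1 - ε) • R' + ε • R'' ∈ 𝒞 ((1 - ε) • β' + ε • β'')

theorem HasTimeSharing.smul_mem_of_le {𝒞 : (ι → ℝ) → Set F} (hts : HasTimeSharing 𝒞)
    (hzero : ∀ β : ι → ℝ, (∀ i, 0 ≤ β i) → (0 : F) ∈ 𝒞 β) {β β' : ι → ℝ}
    (hβ'0 : ∀ i, 0 ≤ β' i) (hββ' : ∀ i, β' i ≤ β i) {R : F} (hR : R ∈ 𝒞 β') {t : ℝ}
    (ht0 : 0 ≤ t) (ht1 : t < 1) : t • R ∈ 𝒞 β := by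
  have hε : 0 < 1 - t := sub_pos.mpr ht1
  set β'' : ι → ℝ := β' + (1 - t)⁻¹ • (β - β')
  have hβ''0 : ∀ i, 0 ≤ β'' i := fun i =>
    add_nonneg (hβ'0 i) (mul_nonneg (inv_nonneg.mpr hε.le) (sub_nonneg.mpr (hββ' i)))
  have hcost : (1 - (1 - t)) • β' + (1 - t) • β'' = β := by
    simp only [β'', smul_add, smul_inv_smul₀ hε.ne']
    module
  have hmix := hts β' β'' hβ'0 hβ''0 R hR 0 (hzero β'' hβ''0) (1 - t) hε.le (by linarith)
  rwa [hcost, smul_zero, add_zero, sub_sub_cancel] at hmix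

end TimeSharing

theorem capacity_region_mono_general
    {k : ℕ}
    (𝒞 : (Fin k → ℝ) → Set (Fin k → ℝ))
    (hclosed : ∀ β : Fin k → ℝ, (∀ i, 0 ≤ β i) → IsClosed (𝒞 β))
    (hzero : ∀ β : Fin k → ℝ, (∀ i, 0 ≤ β i) → (0 : Fin k → ℝ) ∈ 𝒞 β)
    (hts : ∀ β' β'' : Fin k → ℝ, (∀ i, 0 ≤ β' i) → (∀ i, 0 ≤ β'' i) →
      ∀ R' ∈ 𝒞 β', ∀ R'' ∈ 𝒞 β'', ∀ ε : ℝ, 0 ≤ ε → ε ≤ 1 →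
        (1 - ε) • R' + ε • R'' ∈ 𝒞 ((1 - ε) • β' + ε • β''))
    (β β' : Fin k → ℝ) (hβ'0 : ∀ i, 0 ≤ β' i) (hββ' : ∀ i, β' i ≤ β i) :
    𝒞 β' ⊆ 𝒞 β := by
  intro R hR
  have hβ0 : ∀ i, 0 ≤ β i := fun i => (hβ'0 i).trans (hββ' i)
  exact (hclosed β hβ0).mem_of_forall_smul_mem fun t ht =>
    HasTimeSharing.smul_mem_of_le hts hzero hβ'0 hββ' hR ht.1.le ht.2

/-- Theorem 3 (abstract form): let `𝒞` assign to each cost vector `β ∈ [0, ∞)^k` a set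
`𝒞(β) ⊆ [0, ∞)^k` of rate vectors such that (i) each `𝒞(β)` is closed, (ii) the zero rate
vector belongs to every `𝒞(β)`, and (iii) the time-sharing property holds.  Then `𝒞` is
monotone: componentwise `β ≥ β'` implies `𝒞(β) ⊇ 𝒞(β')`. -/
theorem capacity_region_mono
    {k : ℕ} (hk : 1 ≤ k)
    (𝒞 : (Fin k → ℝ) → Set (Fin k → ℝ))
    (hrange : ∀ β : Fin k → ℝ, (∀ i, 0 ≤ β i) → 𝒞 β ⊆ {R | ∀ i, 0 ≤ R i})
    (hclosed : ∀ β : Fin k → ℝ, (∀ i, 0 ≤ β i) → IsClosed (𝒞 β))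
    (hzero : ∀ β : Fin k → ℝ, (∀ i, 0 ≤ β i) → (0 : Fin k → ℝ) ∈ 𝒞 β)
    (hts : ∀ β' β'' : Fin k → ℝ, (∀ i, 0 ≤ β' i) → (∀ i, 0 ≤ β'' i) →
      ∀ R' ∈ 𝒞 β', ∀ R'' ∈ 𝒞 β'', ∀ ε : ℝ, 0 ≤ ε → ε ≤ 1 →
        (1 - ε) • R' + ε • R'' ∈ 𝒞 ((1 - ε) • β' + ε • β''))
    (β β' : Fin k → ℝ) (hβ'0 : ∀ i, 0 ≤ β' i) (hββ' : ∀ i, β' i ≤ β i) :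
    𝒞 β' ⊆ 𝒞 β :=
  capacity_region_mono_general 𝒞 hclosed hzero hts β β' hβ'0 hββ'
end
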